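/- Let P be a full-information protocol in the crash-failure model and r a run. For every node ⟨i,m⟩: K_i(not-known(∃0)) holds at (r,m) if and only if both (1) K_i∃0 does not hold at (r,m), and (2) some time k ≤ m is revealed to ⟨i,m⟩ in r (i.e., for every process j', the node ⟨j',k⟩ is revealed to ⟨i,m⟩). -/

import Mathlib

attribute [local instance] Classical.propDecidable

/-- An adversary in the synchronous crash-failure model: an input vector of binary
initial values, a failure pattern given by the delivery relation `F` (`F m j i` means
the message sent by `j` at time `m` is delivered to `i` at time `m+1`, i.e. in round `m+1`),
and a crash round for each process (`⊤` meaning the process never crashes).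
A process behaves correctly before its crashing round and sends nothing afterwards;
during its crashing round it may send to an arbitrary subset. -/
structure Adversary (n : ℕ) where
  init : Fin n → Bool
  F : ℕ → Fin n → Fin n → Prop
  crash : Fin n → ℕ∞
  crash_pos : ∀ j, 1 ≤ crash j
  before_crash : ∀ (m : ℕ) (j i : Fin n), ((m + 1 : ℕ) : ℕ∞) < crash j → F m j i
  after_crash : ∀ (m : ℕ) (j i : Fin n), crash j < ((m + 1 : ℕ) : ℕ∞) → ¬ F m j i

namespace Adversary

variable {n : ℕ}

/-- A process is faulty if it crashes at some point. -/
def Faulty (A : Adversary n) (j : Fin n) : Prop := A.crash j ≠ ⊤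

/-- The number `f` of actual failures in the run determined by the adversary. -/
noncomputable def numFaults (A : Adversary n) : ℕ := {j | A.Faulty j}.ncard

/-- A process is active at time `m` if it has not crashed before time `m`. -/
def Active (A : Adversary n) (j : Fin n) (m : ℕ) : Prop := ((m : ℕ) : ℕ∞) < A.crash j

end Adversary

/-- `Seen A ⟨j,ℓ⟩ ⟨i,m⟩`: node `⟨j,ℓ⟩` is in the view (communication graph) of node
`⟨i,m⟩`, i.e. there is a message chain from `⟨j,ℓ⟩` to `⟨i,m⟩`. -/
inductive Seen {n : ℕ} (A : Adversary n) : Fin n × ℕ → Fin n × ℕ → Prop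
  | refl (p : Fin n × ℕ) : Seen A p p
  | self {p : Fin n × ℕ} {i : Fin n} {m : ℕ} : Seen A p (i, m) → Seen A p (i, m + 1)
  | step {p : Fin n × ℕ} {j i : Fin n} {m : ℕ} : Seen A p (j, m) → A.F m j i →
      Seen A p (i, m + 1)

open Adversary

/-- Two adversaries give process `i` the same view at time `m` in a full-information
protocol: the same nodes are seen, with the same initial values at seen time-0 nodes
and the same incoming edges at seen later nodes. -/
def sameView {n : ℕ} (A B : Adversary n) (i : Fin n) (m : ℕ) : Prop :=
  (∀ p, Seen A p (i, m) ↔ Seen B p (i, m)) ∧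
  (∀ j, Seen A (j, 0) (i, m) → A.init j = B.init j) ∧
  (∀ (k : ℕ) (j j' : Fin n), Seen A (j', k + 1) (i, m) → (A.F k j j' ↔ B.F k j j'))

/-- The local state of (active) process `i` at time `m` is the same under both
adversaries: `i` is active in both and has the same full-information view. -/
def sameLocal {n : ℕ} (A B : Adversary n) (i : Fin n) (m : ℕ) : Prop :=
  A.Active i m ∧ B.Active i m ∧ sameView A B i m

/-- The runs of the system are those generated by adversaries with at most `t` crashes. -/
def Valid {n : ℕ} (t : ℕ) (A : Adversary n) : Prop := A.numFaults ≤ t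

/-- Knowledge in the full-information protocol: `i` knows the fact `φ` at time `m`
iff `φ` holds at time `m` in every run (with at most `t` failures) in which `i` has
the same local state. -/
def Knows {n : ℕ} (t : ℕ) (φ : Adversary n → ℕ → Prop) (A : Adversary n) (i : Fin n)
    (m : ℕ) : Prop :=
  ∀ B : Adversary n, Valid t B → sameLocal A B i m → φ B m

/-- The fact `∃v`: some process has initial value `v`. -/
def existsVal {n : ℕ} (v : Bool) : Adversary n → ℕ → Prop := fun A _ => ∃ j, A.init j = v

/-- Node `⟨j',m'⟩` is revealed to `⟨i,m⟩`: either it is seen by `⟨i,m⟩`, or for some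
seen node `⟨i',m'⟩` the edge `(⟨j',m'-1⟩,⟨i',m'⟩)` is absent from `i`'s view
(proving that `j'` crashed before time `m'`). -/
def RevealedNode {n : ℕ} (A : Adversary n) (j' : Fin n) (m' : ℕ) (i : Fin n) (m : ℕ) :
    Prop :=
  Seen A (j', m') (i, m) ∨
  ∃ (i' : Fin n) (k : ℕ), m' = k + 1 ∧ Seen A (i', k + 1) (i, m) ∧ ¬ A.F k j' i'

/-- Time `k` is revealed to `⟨i,m⟩` if every node `⟨j',k⟩` is revealed to `⟨i,m⟩`. -/
def RevealedTime {n : ℕ} (A : Adversary n) (k : ℕ) (i : Fin n) (m : ℕ) : Prop :=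
  ∀ j', RevealedNode A j' k i m

/-- A hidden path w.r.t. `⟨i,m⟩`: for each `k ≤ m` a node `⟨j_k,k⟩` not revealed to `⟨i,m⟩`. -/
def HiddenPath {n : ℕ} (A : Adversary n) (i : Fin n) (m : ℕ) : Prop :=
  ∃ js : ℕ → Fin n, ∀ k ≤ m, ¬ RevealedNode A (js k) k i m

/-- `not-known(∃0)`: no process active at time `m` knows `∃0`. -/
def notKnown0 {n : ℕ} (t : ℕ) : Adversary n → ℕ → Prop :=
  fun A m => ∀ j, A.Active j m → ¬ Knows t (existsVal false) A j m

/-- A (full-information, deterministic) decision protocol, described by the decision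
status function: `P A i m = some v` iff by time `m` process `i` has decided `v`
in the run determined by adversary `A`. -/
abbrev ProtoDec (n : ℕ) : Type := Adversary n → Fin n → ℕ → Option Bool

/-- Sanity conditions making a decision-status function a protocol: decisions are
irrevocable, and (for active processes) depend only on the local state. -/
def IsProtocol {n : ℕ} (t : ℕ) (P : ProtoDec n) : Prop :=
  (∀ A i m v, P A i m = some v → P A i (m + 1) = some v) ∧
  (∀ A B i m, Valid t A → Valid t B → sameLocal A B i m → P A i m = P B i m)

/-- Process `i` performs the action `decide(v)` at time `m`: it is decided on `v`
at `m` and was undecided before. -/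
def DecidesAt {n : ℕ} (P : ProtoDec n) (A : Adversary n) (i : Fin n) (m : ℕ) (v : Bool) :
    Prop :=
  P A i m = some v ∧ ∀ k < m, P A i k = none

/-- Decision: every correct process eventually decides. -/
def Decision {n : ℕ} (t : ℕ) (P : ProtoDec n) : Prop :=
  ∀ A : Adversary n, Valid t A → ∀ i, ¬ A.Faulty i → ∃ m, P A i m ≠ none

/-- Validity: if all initial values are `v` then correct processes decide `v`. -/
def Validity {n : ℕ} (t : ℕ) (P : ProtoDec n) : Prop :=
  ∀ A : Adversary n, Valid t A → ∀ v : Bool, (∀ j, A.init j = v) →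
    ∀ i m w, ¬ A.Faulty i → P A i m = some w → w = v

/-- Agreement: all correct processes decide on the same value. -/
def Agreement {n : ℕ} (t : ℕ) (P : ProtoDec n) : Prop :=
  ∀ A : Adversary n, Valid t A → ∀ i j m m' v w, ¬ A.Faulty i → ¬ A.Faulty j →
    P A i m = some v → P A j m' = some w → v = w

def ConsensusSolves {n : ℕ} (t : ℕ) (P : ProtoDec n) : Prop :=
  Decision t P ∧ Validity t P ∧ Agreement t P

/-- Uniform Agreement: all processes that decide (faulty or not) decide the same value. -/
def UniformAgreement {n : ℕ} (t : ℕ) (P : ProtoDec n) : Prop :=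
  ∀ A : Adversary n, Valid t A → ∀ i j m m' v w,
    P A i m = some v → P A j m' = some w → v = w

def UniformConsensusSolves {n : ℕ} (t : ℕ) (P : ProtoDec n) : Prop :=
  Decision t P ∧ Validity t P ∧ UniformAgreement t P

/-- `Q` dominates `P`: for every adversary and process, if `i` has decided by time `m`
in `P` then `i` has decided by time `m` in `Q`. -/
def Dominates {n : ℕ} (t : ℕ) (Q P : ProtoDec n) : Prop :=
  ∀ A : Adversary n, Valid t A → ∀ i m, P A i m ≠ none → Q A i m ≠ none

def StrictlyDominates {n : ℕ} (t : ℕ) (Q P : ProtoDec n) : Prop :=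
  Dominates t Q P ∧ ¬ Dominates t P Q

/-- Turn a per-time decision rule into a decision-status function (the first decision
taken is kept forever). -/
def runDec (step : ℕ → Option Bool) : ℕ → Option Bool
  | 0 => step 0
  | m + 1 => (runDec step m).elim (step (m + 1)) some

/-- The protocol `P₀`: decide 0 as soon as `K_i ∃0` holds, otherwise decide 1 at time `t+1`. -/
noncomputable def P0 (n t : ℕ) : ProtoDec n := fun A i =>
  runDec fun m =>
    if Knows t (existsVal false) A i m then some false
    else if m = t + 1 then some true
    else none

/-- The unbeatable protocol `Opt₀`: decide 0 as soon as `K_i ∃0` holds, and decide 1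
as soon as `K_i not-known(∃0)` holds. -/
noncomputable def Opt0 (n t : ℕ) : ProtoDec n := fun A i =>
  runDec fun m =>
    if Knows t (existsVal false) A i m then some false
    else if Knows t (notKnown0 t) A i m then some true
    else none

/-- The number of processes with initial value `false` (0). -/
noncomputable def zeros {n : ℕ} (A : Adversary n) : ℕ :=
  (Finset.univ.filter fun j => A.init j = false).card

/-- The number of processes with initial value `true` (1). -/
noncomputable def ones {n : ℕ} (A : Adversary n) : ℕ :=
  (Finset.univ.filter fun j => A.init j = true).card

/-- The fact `Maj = 0`: at least `n/2` initial values are 0. -/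
def Maj0 (n : ℕ) : Adversary n → ℕ → Prop := fun A _ => n ≤ 2 * zeros A

/-- The fact `Maj = 1`: strictly more than `n/2` initial values are 1. -/
def Maj1 (n : ℕ) : Adversary n → ℕ → Prop := fun A _ => n < 2 * ones A

noncomputable def seenZeros {n : ℕ} (A : Adversary n) (i : Fin n) (m : ℕ) : ℕ :=
  (Finset.univ.filter fun j => Seen A (j, 0) (i, m) ∧ A.init j = false).card

noncomputable def seenOnes {n : ℕ} (A : Adversary n) (i : Fin n) (m : ℕ) : ℕ :=
  (Finset.univ.filter fun j => Seen A (j, 0) (i, m) ∧ A.init j = true).card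

/-- `Maj(vals(i,m))`: 0 if at least half of the initial values known to `i` at `m`
are 0, and 1 otherwise. -/
noncomputable def MajSeen {n : ℕ} (A : Adversary n) (i : Fin n) (m : ℕ) : Bool :=
  if seenOnes A i m ≤ seenZeros A i m then false else true

/-- The unbeatable majority consensus protocol `Opt_Maj`. -/
noncomputable def OptMaj (n t : ℕ) : ProtoDec n := fun A i =>
  runDec fun m =>
    if Knows t (Maj0 n) A i m then some false
    else if Knows t (Maj1 n) A i m then some true
    else if ∃ k ≤ m, RevealedTime A k i m then some (MajSeen A i m)
    else none

/-- The fact `∀1`: all initial values are 1. -/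
def all1 (n : ℕ) : Adversary n → ℕ → Prop := fun A _ => ∀ j, A.init j = true

/-- The sender set of `i` repeats at `⟨i,m⟩`: `i` hears from the same set of processes
in rounds `m-1` and `m` (only meaningful for `m ≥ 2`). -/
def senderSetRepeats {n : ℕ} (A : Adversary n) (i : Fin n) (m : ℕ) : Prop :=
  ∀ j, (A.F (m - 2) j i ↔ A.F (m - 1) j i)

/-- The protocol `P0_opt` of Halpern, Moses and Waarts. -/
noncomputable def P0opt (n t : ℕ) : ProtoDec n := fun A i =>
  runDec fun m =>
    if Knows t (existsVal false) A i m then some false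
    else if Knows t (all1 n) A i m ∨ (2 ≤ m ∧ senderSetRepeats A i m) then some true
    else none

/-- The fact `∃correct(v)`: some correct (never-failing) process knows `∃v`. -/
def ExistsCorrectKnows {n : ℕ} (t : ℕ) (v : Bool) : Adversary n → ℕ → Prop :=
  fun A m => ∃ j, ¬ A.Faulty j ∧ Knows t (existsVal v) A j m

/-- The number `d` of failures process `i` knows of at time `m`: the number of
processes `j ≠ i` from which `i` receives no message in round `m`. -/
noncomputable def knownFaults {n : ℕ} (A : Adversary n) (i : Fin n) : ℕ → ℕ
  | 0 => 0
  | m + 1 => (Finset.univ.filter fun j => j ≠ i ∧ ¬ A.F m j i).card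

/-- The protocol `u-P₀` for uniform consensus: decide 0 as soon as
`K_i ∃correct(0)` holds, otherwise decide 1 at time `t+1`. -/
noncomputable def uP0 (n t : ℕ) : ProtoDec n := fun A i =>
  runDec fun m =>
    if Knows t (ExistsCorrectKnows t false) A i m then some false
    else if m = t + 1 then some true
    else none

/-- The unbeatable uniform consensus protocol `u-Opt₀`. -/
noncomputable def uOpt0 (n t : ℕ) : ProtoDec n := fun A i =>
  runDec fun m =>
    if Knows t (ExistsCorrectKnows t false) A i m then some false
    else if ¬ Knows t (existsVal false) A i m ∧ ∃ k ≤ m, RevealedTime A k i m then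
      some true
    else none

/-- All decisions in the run `P[A]` are taken at or before time `m`. -/
def AllDecidedBy {n : ℕ} (P : ProtoDec n) (A : Adversary n) (m : ℕ) : Prop :=
  ∀ i k, P A i k ≠ none → P A i m ≠ none

/-- `Q` last-decider dominates `P`. -/
def LDDominates {n : ℕ} (t : ℕ) (Q P : ProtoDec n) : Prop :=
  ∀ A : Adversary n, Valid t A → ∀ m, AllDecidedBy P A m → AllDecidedBy Q A m

/-- A 0-chain for `⟨i,m⟩`: distinct processes `j₀,…,j_d = i` with `d ≤ m`, `j₀` having
initial value 0, and `j_k` receiving a message from `j_{k-1}` at time `k` (round `k`). -/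
def ZeroChain {n : ℕ} (A : Adversary n) (i : Fin n) (m : ℕ) : Prop :=
  ∃ d ≤ m, ∃ js : ℕ → Fin n, js d = i ∧
    (∀ k ≤ d, ∀ l ≤ d, js k = js l → k = l) ∧
    A.init (js 0) = false ∧
    ∀ k, 1 ≤ k → k ≤ d → A.F (k - 1) (js (k - 1)) (js k)

/-!
If no time `k ≤ m` is revealed to `⟨i,m⟩`, pick for every `k ≤ m` a node `⟨j_k,k⟩` hidden from
`⟨i,m⟩`. Rewiring the run so that `j_0` starts with `0` and every `j_k` relays to `j_{k+1}` in
round `k+1` leaves the view of `i` unchanged, yet `j_m` is active at `m` and knows `∃0`; hence `i`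
cannot know `not-known(∃0)`. Conversely, if time `k` is revealed, every chain from an initial node
to an active node `⟨j,m⟩` crosses time `k` at a node that `i` sees (the alternative, a node proven
crashed, cannot reach an active node). So active processes only see initial values that `i` sees,
and if `i` does not know `∃0` none of these is `0`.
-/

namespace Adversary

variable {n : ℕ} (A : Adversary n)

theorem le_crash_of_F {l : ℕ} {j x : Fin n} (h : A.F l j x) :
    ((l + 1 : ℕ) : ℕ∞) ≤ A.crash j :=
  not_lt.mp fun hlt => A.after_crash l j x hlt h

theorem crash_le_of_not_F {l : ℕ} {j x : Fin n} (h : ¬ A.F l j x) :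
    A.crash j ≤ ((l + 1 : ℕ) : ℕ∞) :=
  not_lt.mp fun hlt => h (A.before_crash l j x hlt)

end Adversary

namespace Seen

variable {n : ℕ} {A : Adversary n}

theorem trans {p q r : Fin n × ℕ} (h₁ : Seen A p q) (h₂ : Seen A q r) : Seen A p r := by
  induction h₂ with
  | refl => exact h₁
  | self _ ih => exact ih.self
  | step _ hF ih => exact ih.step hF

theorem snd_le {p q : Fin n × ℕ} (h : Seen A p q) : p.2 ≤ q.2 := by
  induction h with
  | refl => exact le_rfl
  | self _ ih | step _ _ ih => exact ih.trans (Nat.le_succ _)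

theorem of_le (i : Fin n) {k m : ℕ} (h : k ≤ m) : Seen A (i, k) (i, m) := by
  induction m, h using Nat.le_induction with
  | base => exact .refl _
  | succ _ _ ih => exact ih.self

theorem exists_mid {p q : Fin n × ℕ} (h : Seen A p q) {k : ℕ} (h₁ : p.2 ≤ k) (h₂ : k ≤ q.2) :
    ∃ c, Seen A p (c, k) ∧ Seen A (c, k) q := by
  induction h generalizing k with
  | refl =>
    obtain rfl : k = p.2 := le_antisymm h₂ h₁
    exact ⟨p.1, .refl _, .refl _⟩
  | @self x l hpx ih =>
    by_cases hk : k ≤ l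
    · obtain ⟨c, hc₁, hc₂⟩ := ih h₁ hk
      exact ⟨c, hc₁, hc₂.self⟩
    · obtain rfl : k = l + 1 := by simp only at h₂; omega
      exact ⟨x, hpx.self, .refl _⟩
  | @step y x l hpy hF ih =>
    by_cases hk : k ≤ l
    · obtain ⟨c, hc₁, hc₂⟩ := ih h₁ hk
      exact ⟨c, hc₁, hc₂.step hF⟩
    · obtain rfl : k = l + 1 := by simp only at h₂; omega
      exact ⟨x, hpy.step hF, .refl _⟩

theorem fst_eq_of_crash_le {c : Fin n} {k : ℕ} {q : Fin n × ℕ} (h : Seen A (c, k) q)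
    (hc : A.crash c ≤ k) : q.1 = c := by
  induction h with
  | refl => rfl
  | self _ ih => exact ih
  | @step y x l hcy hF ih =>
    subst ih
    have hkl : k ≤ l := hcy.snd_le
    have hlk : ((l + 1 : ℕ) : ℕ∞) ≤ k := (A.le_crash_of_F hF).trans hc
    norm_cast at hlk
    omega

theorem seen_iff_of_edges {B : Adversary n} {i : Fin n} {m : ℕ}
    (hF : ∀ k j x, Seen A (x, k + 1) (i, m) → (A.F k j x ↔ B.F k j x))
    {p q : Fin n × ℕ} (hq : Seen A q (i, m)) : Seen A p q ↔ Seen B p q := by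
  constructor
  · intro hpq
    induction hpq with
    | refl => exact .refl _
    | self _ ih => exact (ih ((Seen.refl _).self.trans hq)).self
    | step _ hAF ih =>
      exact (ih (((Seen.refl _).step hAF).trans hq)).step ((hF _ _ _ hq).1 hAF)
  · intro hpq
    induction hpq with
    | refl => exact .refl _
    | self _ ih => exact (ih ((Seen.refl _).self.trans hq)).self
    | step _ hBF ih =>
      have hAF := (hF _ _ _ hq).2 hBF
      exact (ih (((Seen.refl _).step hAF).trans hq)).step hAF

end Seen

section View

variable {n : ℕ}

theorem sameView_of_edges {A B : Adversary n} {i : Fin n} {m : ℕ}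
    (hF : ∀ k j x, Seen A (x, k + 1) (i, m) → (A.F k j x ↔ B.F k j x))
    (hinit : ∀ j, Seen A (j, 0) (i, m) → A.init j = B.init j) : sameView A B i m :=
  ⟨fun _ => Seen.seen_iff_of_edges hF (.refl _), hinit, hF⟩

theorem sameLocal_self {A : Adversary n} {i : Fin n} {m : ℕ} (h : A.Active i m) :
    sameLocal A A i m :=
  ⟨h, h, fun _ => Iff.rfl, fun _ _ => rfl, fun _ _ _ _ => Iff.rfl⟩

theorem knows_existsVal_iff {t : ℕ} {A : Adversary n} {i : Fin n} {m : ℕ} {v : Bool}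
    (hA : Valid t A) (hi : A.Active i m) :
    Knows t (existsVal v) A i m ↔ ∃ j, Seen A (j, 0) (i, m) ∧ A.init j = v := by
  constructor
  · intro hK
    by_contra! hnone
    let B : Adversary n := { A with init := fun _ => !v }
    have hview : sameView A B i m :=
      sameView_of_edges (fun _ _ _ _ => Iff.rfl) fun j hj => Bool.eq_not_iff.mpr (hnone j hj)
    obtain ⟨j, hj⟩ := hK B hA ⟨hi, hi, hview⟩
    cases v <;> simp [B] at hj
  · rintro ⟨j, hs, hv⟩ B _ hB
    exact ⟨j, (hB.2.2.2.1 j hs).symm.trans hv⟩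

theorem RevealedTime.of_sameView {A B : Adversary n} {i : Fin n} {k m : ℕ}
    (hv : sameView A B i m) (h : RevealedTime A k i m) : RevealedTime B k i m := by
  intro j
  rcases h j with hs | ⟨x, l, rfl, hs, hF⟩
  · exact .inl ((hv.1 _).1 hs)
  · exact .inr ⟨x, l, rfl, (hv.1 _).1 hs, fun hB => hF ((hv.2.2 l j x hs).2 hB)⟩

theorem RevealedTime.seen_of_seen {A : Adversary n} {i j j' : Fin n} {k l m : ℕ}
    (hrev : RevealedTime A k i m) (hkm : k ≤ m) (hj : A.Active j m) (hlk : l ≤ k)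
    (hs : Seen A (j', l) (j, m)) : Seen A (j', l) (i, m) := by
  obtain ⟨c, hc₁, hc₂⟩ := hs.exists_mid hlk hkm
  rcases hrev c with hc | ⟨x, k', rfl, -, hF⟩
  · exact hc₁.trans hc
  · have hcrash := A.crash_le_of_not_F hF
    obtain rfl : j = c := hc₂.fst_eq_of_crash_le hcrash
    have hmk : ((m : ℕ) : ℕ∞) < ((k' + 1 : ℕ) : ℕ∞) := hj.trans_le hcrash
    norm_cast at hmk
    omega

theorem hiddenPath_of_not_revealedTime {A : Adversary n} {i : Fin n} {m : ℕ}
    (h : ¬ ∃ k ≤ m, RevealedTime A k i m) : HiddenPath A i m := by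
  push Not at h
  have hnode : ∀ k, ∃ j, k ≤ m → ¬ RevealedNode A j k i m := fun k => by
    by_cases hk : k ≤ m
    · obtain ⟨j, hj⟩ := not_forall.mp (h k hk)
      exact ⟨j, fun _ => hj⟩
    · exact ⟨i, fun hk' => absurd hk' hk⟩
  choose js hjs using hnode
  exact ⟨js, hjs⟩

end View

namespace Adversary

variable {n : ℕ} (A : Adversary n) (m : ℕ) (js : ℕ → Fin n)

/-- A process `js k` that crashes exactly at time `k` must still relay in round `k + 1`, so its
crash is postponed by one round; this keeps the set of faulty processes. -/
noncomputable def chainCrash (j : Fin n) : ℕ∞ :=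
  if ∃ k ≤ m, js k = j ∧ A.crash j = k then A.crash j + 1 else A.crash j

def chainF (l : ℕ) (j x : Fin n) : Prop :=
  ((l + 1 : ℕ) : ℕ∞) < A.chainCrash m js j ∨
    (¬ A.chainCrash m js j < ((l + 1 : ℕ) : ℕ∞) ∧ (A.F l j x ∨ (j = js l ∧ x = js (l + 1))))

theorem crash_le_chainCrash (j : Fin n) : A.crash j ≤ A.chainCrash m js j := by
  unfold chainCrash
  split
  · exact le_self_add
  · exact le_rfl

noncomputable def withChain : Adversary n where
  init j := if j = js 0 then false else A.init j
  F := A.chainF m js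
  crash := A.chainCrash m js
  crash_pos j := (A.crash_pos j).trans (A.crash_le_chainCrash m js j)
  before_crash _ _ _ h := .inl h
  after_crash _ _ _ h hF := hF.elim (fun h' => lt_asymm h h') fun h' => h'.1 h

theorem valid_withChain {t : ℕ} (hA : Valid t A) : Valid t (A.withChain m js) := by
  have hfaulty : ∀ j, (A.withChain m js).Faulty j ↔ A.Faulty j := fun j => by
    simp only [Faulty, withChain, chainCrash]
    split <;> simp
  simpa only [Valid, numFaults, hfaulty] using hA

variable {A m js} {i : Fin n}

theorem F_of_hidden (hjs : ∀ k ≤ m, ¬ RevealedNode A (js k) k i m) {l : ℕ} {x : Fin n}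
    (hs : Seen A (x, l + 1) (i, m)) : A.F l (js (l + 1)) x := by
  by_contra hF
  exact hjs (l + 1) hs.snd_le (.inr ⟨x, l, rfl, hs, hF⟩)

theorem le_crash_of_hidden (hjs : ∀ k ≤ m, ¬ RevealedNode A (js k) k i m) {k : ℕ}
    (hk : k ≤ m) : (k : ℕ∞) ≤ A.crash (js k) := by
  cases k with
  | zero => simp
  | succ l => exact A.le_crash_of_F (F_of_hidden hjs (Seen.of_le i hk))

theorem succ_le_chainCrash (hjs : ∀ k ≤ m, ¬ RevealedNode A (js k) k i m) {k : ℕ}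
    (hk : k ≤ m) : ((k + 1 : ℕ) : ℕ∞) ≤ A.chainCrash m js (js k) := by
  have hle := le_crash_of_hidden hjs hk
  unfold chainCrash
  split
  · rename_i h
    obtain ⟨k₀, -, -, hcrash⟩ := h
    rw [hcrash] at hle ⊢
    norm_cast at hle ⊢
    omega
  · rename_i h
    have hlt : (k : ℕ∞) < A.crash (js k) := hle.lt_of_ne fun he => h ⟨k, hk, rfl, he.symm⟩
    push_cast
    exact Order.add_one_le_of_lt hlt

theorem F_of_lt_chainCrash (hjs : ∀ k ≤ m, ¬ RevealedNode A (js k) k i m) {l : ℕ}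
    {j x : Fin n} (hs : Seen A (x, l + 1) (i, m))
    (hlt : ((l + 1 : ℕ) : ℕ∞) < A.chainCrash m js j) : A.F l j x := by
  unfold chainCrash at hlt
  split at hlt
  · rename_i h
    obtain ⟨k₀, -, rfl, hcrash⟩ := h
    rw [hcrash] at hlt
    norm_cast at hlt
    rcases (show l + 1 < k₀ ∨ l + 1 = k₀ by omega) with hlk | rfl
    · exact A.before_crash _ _ _ (by rw [hcrash]; exact_mod_cast hlk)
    · exact F_of_hidden hjs hs
  · exact A.before_crash _ _ _ hlt

theorem sameLocal_withChain (hjs : ∀ k ≤ m, ¬ RevealedNode A (js k) k i m)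
    (hi : A.Active i m) : sameLocal A (A.withChain m js) i m := by
  have hedges : ∀ l j x, Seen A (x, l + 1) (i, m) → (A.F l j x ↔ A.chainF m js l j x) := by
    intro l j x hs
    constructor
    · intro hF
      exact .inr ⟨not_lt.mpr ((A.le_crash_of_F hF).trans (A.crash_le_chainCrash m js j)), .inl hF⟩
    · rintro (hlt | ⟨-, hF | ⟨-, rfl⟩⟩)
      · exact F_of_lt_chainCrash hjs hs hlt
      · exact hF
      · exact absurd (.inl hs) (hjs _ hs.snd_le)
  have hinit : ∀ j, Seen A (j, 0) (i, m) → A.init j = (A.withChain m js).init j := by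
    intro j hs
    have hj : j ≠ js 0 := by
      rintro rfl
      exact hjs 0 (Nat.zero_le m) (.inl hs)
    simp [withChain, hj]
  exact ⟨hi, hi.trans_le (A.crash_le_chainCrash m js i), sameView_of_edges hedges hinit⟩

theorem seen_withChain (hjs : ∀ k ≤ m, ¬ RevealedNode A (js k) k i m) {k : ℕ} (hk : k ≤ m) :
    Seen (A.withChain m js) (js 0, 0) (js k, k) := by
  induction k with
  | zero => exact .refl _
  | succ k ih =>
    exact (ih (by omega)).step
      (.inr ⟨not_lt.mpr (succ_le_chainCrash hjs (by omega)), .inr ⟨rfl, rfl⟩⟩)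

theorem active_withChain (hjs : ∀ k ≤ m, ¬ RevealedNode A (js k) k i m) :
    (A.withChain m js).Active (js m) m :=
  (show ((m : ℕ) : ℕ∞) < ((m + 1 : ℕ) : ℕ∞) by exact_mod_cast m.lt_succ_self).trans_le
    (succ_le_chainCrash hjs le_rfl)

end Adversary

theorem HiddenPath.exists_active_knows_zero {n t : ℕ} {A : Adversary n} {i : Fin n} {m : ℕ}
    (hA : Valid t A) (hi : A.Active i m) (h : HiddenPath A i m) :
    ∃ B, Valid t B ∧ sameLocal A B i m ∧
      ∃ j, B.Active j m ∧ Knows t (existsVal false) B j m := by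
  obtain ⟨js, hjs⟩ := h
  have hB := A.valid_withChain m js hA
  have hactive := Adversary.active_withChain hjs
  refine ⟨A.withChain m js, hB, Adversary.sameLocal_withChain hjs hi, js m, hactive, ?_⟩
  exact (knows_existsVal_iff hB hactive).2
    ⟨js 0, Adversary.seen_withChain hjs le_rfl, by simp [Adversary.withChain]⟩

theorem knows_not_known_iff_revealed_general (n t : ℕ)
    (A : Adversary n) (hA : Valid t A) (i : Fin n) (m : ℕ) (hact : A.Active i m) :
    Knows t (notKnown0 t) A i m ↔
      (¬ Knows t (existsVal false) A i m ∧ ∃ k ≤ m, RevealedTime A k i m) := by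
  constructor
  · intro hK
    refine ⟨hK A hA (sameLocal_self hact) i hact, ?_⟩
    by_contra hnone
    obtain ⟨B, hB, hAB, j, hj, hknows⟩ :=
      (hiddenPath_of_not_revealedTime hnone).exists_active_knows_zero hA hact
    exact hK B hB hAB j hj hknows
  · rintro ⟨hnk, k, hkm, hrev⟩ B hB hAB j hj
    rw [knows_existsVal_iff hA hact] at hnk
    rw [knows_existsVal_iff hB hj]
    rintro ⟨j', hs, hj'⟩
    have hsB := (hrev.of_sameView hAB.2.2).seen_of_seen hkm hj (Nat.zero_le k) hs
    have hsA := (hAB.2.2.1 _).2 hsB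
    exact hnk ⟨j', hsA, (hAB.2.2.2.1 j' hsA).trans hj'⟩

/-- `K_i not-known(∃0)` holds at `⟨i,m⟩` iff `¬ K_i ∃0` and some time `k ≤ m` is
revealed to `⟨i,m⟩`. -/
theorem knows_not_known_iff_revealed (n t : ℕ) (ht : t < n)
    (A : Adversary n) (hA : Valid t A) (i : Fin n) (m : ℕ) (hact : A.Active i m) :
    Knows t (notKnown0 t) A i m ↔
      (¬ Knows t (existsVal false) A i m ∧ ∃ k ≤ m, RevealedTime A k i m) :=
  knows_not_known_iff_revealed_general n t A hA i m hact
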